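/- arXiv:math/0510375 — 13 statements merged into one kernel-verified Lean document; each statement's English description precedes it below -/
import Mathlib

section
/- Let ū ∈ G be a fixed central element, write r₁ = r(ū) and l₁ = l(ū), and let ξ ∈ K^* satisfy ξ² r₁ l₁ = 1. Then for all k ∈ ℤ and all m ∈ G, ξ^k h(m + k·ū) + ξ^{-k} h(m - k·ū) = ((ξ r₁)^k + (ξ r₁)^{-k}) h(m). (Here k·ū denotes the k-th multiple of ū in G.) -/
/-!
Since `r` and `l` are characters, `h (m ± k • ū) = h m * r (± k • ū) + l m * h (± k • ū)`, so it
suffices that `ξ ^ k * h (k • ū) + ξ ^ (-k) * h (-(k • ū)) = 0`. Expanding `h (g + -g) = 0` gives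
`h (-g) = -h g / (r g * l g)` for every `g`, and at `g = k • ū` the factor `r g * l g = (r₁ l₁) ^ k`
equals `ξ ^ (-2k)`, which is exactly the cancellation needed.
-/

namespace AddChar

variable {G K : Type*} [AddGroup G] [Field K]

theorem cocycle_apply_neg (r l : AddChar G K) {h : G → K}
    (hcoc : ∀ m n, h (m + n) = h m * r n + l m * h n) (h0 : h 0 = 0) (g : G) :
    h (-g) = -(h g * (r g * l g)⁻¹) := by
  have hl : l g ≠ 0 := (l.val_isUnit g).ne_zero
  have hsum := hcoc g (-g)
  rw [add_neg_cancel, h0, map_neg_eq_inv] at hsum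
  field_simp
  linear_combination -hsum

theorem cocycle_mul_add_inv_mul_neg_eq_zero (r l : AddChar G K) {h : G → K}
    (hcoc : ∀ m n, h (m + n) = h m * r n + l m * h n) (h0 : h 0 = 0) {g : G} {c : K}
    (hc : c ^ 2 * (r g * l g) = 1) :
    c * h g + c⁻¹ * h (-g) = 0 := by
  have hc0 : c ≠ 0 := by rintro rfl; simp at hc
  rw [cocycle_apply_neg r l hcoc h0, inv_eq_of_mul_eq_one_left hc]
  field_simp
  ring

end AddChar

theorem stmt2_general {K : Type*} [Field K] {G : Type*} [AddGroup G]
    (r l h : G → K)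
    (hr1 : r 0 = 1) (hradd : ∀ m n, r (m + n) = r m * r n)
    (hl1 : l 0 = 1) (hladd : ∀ m n, l (m + n) = l m * l n)
    (hcoc : ∀ m n, h (m + n) = h m * r n + l m * h n)
    (h0 : h 0 = 0)
    (u : G)
    (ξ : K) (hxirl : ξ ^ 2 * (r u * l u) = 1) :
    ∀ (k : ℤ) (m : G),
      ξ ^ k * h (m + k • u) + ξ ^ (-k) * h (m - k • u)
        = ((ξ * r u) ^ k + (ξ * r u) ^ (-k)) * h m := by
  intro k m
  let ρ : AddChar G K := ⟨r, hr1, hradd⟩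
  let ℓ : AddChar G K := ⟨l, hl1, hladd⟩
  have hrk (j : ℤ) : r (j • u) = r u ^ j := ρ.map_zsmul_eq_zpow j u
  have hlk : l (k • u) = l u ^ k := ℓ.map_zsmul_eq_zpow k u
  have hcancel : ξ ^ k * h (k • u) + (ξ ^ k)⁻¹ * h (-(k • u)) = 0 := by
    refine AddChar.cocycle_mul_add_inv_mul_neg_eq_zero ρ ℓ hcoc h0 ?_
    change (ξ ^ k) ^ 2 * (r (k • u) * l (k • u)) = 1
    rw [hrk, hlk, ← zpow_natCast, ← zpow_mul, mul_comm k, zpow_mul, ← mul_zpow, ← mul_zpow,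
      zpow_natCast, hxirl, one_zpow]
  rw [sub_eq_add_neg, ← neg_zsmul, hcoc, hcoc, hrk, hrk, neg_zsmul, mul_zpow, mul_zpow, zpow_neg ξ]
  linear_combination l m * hcancel

theorem stmt2 {K : Type*} [Field K] {G : Type*} [AddGroup G]
    (r l h : G → K)
    (hr1 : r 0 = 1) (hradd : ∀ m n, r (m + n) = r m * r n) (hrne : ∀ m, r m ≠ 0)
    (hl1 : l 0 = 1) (hladd : ∀ m n, l (m + n) = l m * l n) (hlne : ∀ m, l m ≠ 0)
    (hcoc : ∀ m n, h (m + n) = h m * r n + l m * h n)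
    (h0 : h 0 = 0)
    (u : G) (hu : ∀ g : G, u + g = g + u)
    (ξ : K) (hξ : ξ ≠ 0) (hxirl : ξ ^ 2 * (r u * l u) = 1) :
    ∀ (k : ℤ) (m : G),
      ξ ^ k * h (m + k • u) + ξ ^ (-k) * h (m - k • u)
        = ((ξ * r u) ^ k + (ξ * r u) ^ (-k)) * h m :=
  stmt2_general r l h hr1 hradd hl1 hladd hcoc h0 u ξ hxirl
end

section
/- With the same hypotheses, for every integer n ≥ 1, h(n·ū) = h(ū) · l₁^{n-1} · ∑_{i=0}^{n-1} (ξ r₁)^{2i}. -/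
/-!
Iterating the twisted cocycle identity `h (m + n) = h m * r n + l m * h n` along multiples of `u`
gives `h (n • u) = h u * ∑ i < n, l(u)^i r(u)^(n-1-i)`, a two-variable geometric sum. The
hypothesis `ξ² r(u) l(u) = 1` says exactly that `r(u) = (ξ r(u))² l(u)`, so `l(u)^(n-1)` factors out
and what remains is the geometric sum in `(ξ r(u))²`.
-/

open Finset

lemma map_nsmul_eq_pow_of_map_add {M G : Type*} [Monoid M] [AddMonoid G] {l : G → M}
    (hl0 : l 0 = 1) (hladd : ∀ m n, l (m + n) = l m * l n) (u : G) (n : ℕ) :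
    l (n • u) = l u ^ n := by
  induction n with
  | zero => simpa using hl0
  | succ n ih => rw [succ_nsmul, hladd, ih, pow_succ]

lemma geom_sum₂_mul_right_eq_pow_mul_geom_sum {R : Type*} [CommSemiring R] (x q : R) (n : ℕ) :
    ∑ i ∈ range n, x ^ i * (q * x) ^ (n - 1 - i) = x ^ (n - 1) * ∑ i ∈ range n, q ^ i := by
  rw [mul_sum, ← sum_range_reflect (fun i => x ^ (n - 1) * q ^ i)]
  refine sum_congr rfl fun i hi => ?_
  have hin : i + (n - 1 - i) = n - 1 := by have := mem_range.mp hi; omega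
  rw [mul_pow, mul_left_comm, ← pow_add, hin, mul_comm]

lemma map_nsmul_eq_mul_geom_sum₂ {R G : Type*} [CommRing R] [AddMonoid G] {r l h : G → R}
    (hl0 : l 0 = 1) (hladd : ∀ m n, l (m + n) = l m * l n)
    (hcoc : ∀ m n, h (m + n) = h m * r n + l m * h n) (h0 : h 0 = 0) (u : G) (n : ℕ) :
    h (n • u) = h u * ∑ i ∈ range n, l u ^ i * r u ^ (n - 1 - i) := by
  induction n with
  | zero => simpa using h0
  | succ n ih =>
    rw [succ_nsmul, hcoc, ih, map_nsmul_eq_pow_of_map_add hl0 hladd, Nat.add_sub_cancel,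
      geom_sum₂_succ_eq]
    ring

theorem stmt3_general {K : Type*} [Field K] {G : Type*} [AddGroup G]
    (r l h : G → K)
    (hl1 : l 0 = 1) (hladd : ∀ m n, l (m + n) = l m * l n)
    (hcoc : ∀ m n, h (m + n) = h m * r n + l m * h n)
    (h0 : h 0 = 0)
    (u : G)
    (ξ : K) (hxirl : ξ ^ 2 * (r u * l u) = 1) :
    ∀ n : ℕ, 1 ≤ n →
      h (n • u) = h u * (l u) ^ (n - 1) * ∑ i ∈ Finset.range n, (ξ * r u) ^ (2 * i) := by
  intro n _
  have hr : r u = (ξ * r u) ^ 2 * l u := by linear_combination (-(r u)) * hxirl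
  rw [map_nsmul_eq_mul_geom_sum₂ hl1 hladd hcoc h0, hr, geom_sum₂_mul_right_eq_pow_mul_geom_sum,
    ← hr, mul_assoc]
  simp only [pow_mul]

theorem stmt3 {K : Type*} [Field K] {G : Type*} [AddGroup G]
    (r l h : G → K)
    (hr1 : r 0 = 1) (hradd : ∀ m n, r (m + n) = r m * r n) (hrne : ∀ m, r m ≠ 0)
    (hl1 : l 0 = 1) (hladd : ∀ m n, l (m + n) = l m * l n) (hlne : ∀ m, l m ≠ 0)
    (hcoc : ∀ m n, h (m + n) = h m * r n + l m * h n)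
    (h0 : h 0 = 0)
    (u : G) (hu : ∀ g : G, u + g = g + u)
    (ξ : K) (hξ : ξ ≠ 0) (hxirl : ξ ^ 2 * (r u * l u) = 1) :
    ∀ n : ℕ, 1 ≤ n →
      h (n • u) = h u * (l u) ^ (n - 1) * ∑ i ∈ Finset.range n, (ξ * r u) ^ (2 * i) :=
  stmt3_general r l h hl1 hladd hcoc h0 u ξ hxirl
end

section
/- Assume additionally h(ū) ≠ 0, and define G_{1/2} = {m ∈ G : h(m - ū) + ξ h(m) = 0}. If G_{1/2} is nonempty then ξ r₁ ≠ -1. -/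
theorem cocycle_eq_sub_add {R G : Type*} [Semiring R] [AddGroup G] {r l h : G → R}
    (hcoc : ∀ m n, h (m + n) = h m * r n + l m * h n) (m u : G) :
    h m = h (m - u) * r u + l (m - u) * h u := by
  simpa using hcoc (m - u) u

theorem stmt4_general {K : Type*} [Field K] {G : Type*} [AddGroup G]
    (r l h : G → K)
    (hlne : ∀ m, l m ≠ 0)
    (hcoc : ∀ m n, h (m + n) = h m * r n + l m * h n)
    (u : G)
    (ξ : K)
    (hhu : h u ≠ 0)
    (hne : ∃ m : G, h (m - u) + ξ * h m = 0) :
    ξ * r u ≠ -1 := by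
  intro hξr
  obtain ⟨m, hm⟩ := hne
  -- with h (m - u) = -ξ h m and ξ r u = -1, the expansion of h m reads h m = h m + l (m - u) h u
  have hlh : l (m - u) * h u = 0 := by
    linear_combination -cocycle_eq_sub_add hcoc m u - r u * hm + h m * hξr
  exact mul_ne_zero (hlne _) hhu hlh

theorem stmt4 {K : Type*} [Field K] {G : Type*} [AddGroup G]
    (r l h : G → K)
    (hr1 : r 0 = 1) (hradd : ∀ m n, r (m + n) = r m * r n) (hrne : ∀ m, r m ≠ 0)
    (hl1 : l 0 = 1) (hladd : ∀ m n, l (m + n) = l m * l n) (hlne : ∀ m, l m ≠ 0)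
    (hcoc : ∀ m n, h (m + n) = h m * r n + l m * h n)
    (h0 : h 0 = 0)
    (u : G) (hu : ∀ g : G, u + g = g + u)
    (ξ : K) (hξ : ξ ≠ 0) (hxirl : ξ ^ 2 * (r u * l u) = 1)
    (hhu : h u ≠ 0)
    (hne : ∃ m : G, h (m - u) + ξ * h m = 0) :
    ξ * r u ≠ -1 :=
  stmt4_general r l h hlne hcoc u ξ hhu hne
end

section
/- Assume h(ū) ≠ 0. If m ∈ G_{1/2} then ū - m ∈ G_{1/2}. -/
/-! The membership condition for `G_{1/2}` unwinds, via the cocycle identity and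
`ξ² r(ū) l(ū) = 1`, to the relation `ξ l(m) h(ū) = h(m) (ξ l(ū) + 1)`. Since `ū` is central,
`(ū - m) - ū = -m`; expanding `h(-m)` and `h(ū - m)` by the cocycle identity, the membership
condition for `ū - m`, multiplied by `l(m)`, becomes `r(-m)` times the same relation. -/

section TwistedCocycle

variable {K G : Type*} [AddGroup G]

/-- The set `G_{1/2}`, with `u` playing the role of `ū`. -/
def halfSet [Ring K] (h : G → K) (u : G) (ξ : K) : Set G :=
  {m | h (m - u) + ξ * h m = 0}

theorem cocycle_add_neg [Ring K] {r l h : G → K}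
    (hcoc : ∀ m n, h (m + n) = h m * r n + l m * h n) (h0 : h 0 = 0) (g : G) :
    h g * r (-g) + l g * h (-g) = 0 := by
  simpa [h0] using (hcoc g (-g)).symm

theorem mul_mul_eq_of_mem_halfSet [CommRing K] {r l h : G → K}
    (hcoc : ∀ m n, h (m + n) = h m * r n + l m * h n) (h0 : h 0 = 0)
    {u : G} (hru : r u * r (-u) = 1) {ξ : K} (hξ : ξ ^ 2 * (r u * l u) = 1)
    {m : G} (hm : m ∈ halfSet h u ξ) :
    ξ * l m * h u = h m * (ξ * l u + 1) := by
  have hm : h m * r (-u) + l m * h (-u) + ξ * h m = 0 := by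
    rw [← hcoc, ← sub_eq_add_neg]; exact hm
  linear_combination (-(ξ * l u * r u)) * hm + (ξ * r u * l m) * cocycle_add_neg hcoc h0 u
    + (ξ * l u * h m - ξ * l m * h u) * hru + h m * hξ

theorem sub_mem_halfSet [CommRing K] [IsDomain K] {r l h : G → K}
    (hcoc : ∀ m n, h (m + n) = h m * r n + l m * h n) (h0 : h 0 = 0)
    {u : G} (hu : ∀ g : G, u + g = g + u) {ξ : K} {m : G} (hlm : l m ≠ 0)
    (hrel : ξ * l m * h u = h m * (ξ * l u + 1)) :
    u - m ∈ halfSet h u ξ := by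
  have hsub : u - m - u = -m := by
    rw [sub_eq_add_neg u m, hu (-m), add_sub_cancel_right]
  have hexp : l m * (h (-m) + ξ * (h u * r (-m) + l u * h (-m))) = 0 := by
    linear_combination (1 + ξ * l u) * cocycle_add_neg hcoc h0 m + r (-m) * hrel
  show h (u - m - u) + ξ * h (u - m) = 0
  rw [hsub, sub_eq_add_neg u m, hcoc u (-m)]
  exact (mul_eq_zero.mp hexp).resolve_left hlm

end TwistedCocycle

theorem stmt6_general {K : Type*} [Field K] {G : Type*} [AddGroup G]
    (r l h : G → K)
    (hr1 : r 0 = 1) (hradd : ∀ m n, r (m + n) = r m * r n)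
    (hlne : ∀ m, l m ≠ 0)
    (hcoc : ∀ m n, h (m + n) = h m * r n + l m * h n)
    (h0 : h 0 = 0)
    (u : G) (hu : ∀ g : G, u + g = g + u)
    (ξ : K) (hxirl : ξ ^ 2 * (r u * l u) = 1)
    (m : G) (hm : h (m - u) + ξ * h m = 0) :
    h ((u - m) - u) + ξ * h (u - m) = 0 := by
  have hru : r u * r (-u) = 1 := by rw [← hradd, add_neg_cancel, hr1]
  exact sub_mem_halfSet hcoc h0 hu (hlne m)
    (mul_mul_eq_of_mem_halfSet hcoc h0 hru hxirl hm)

theorem stmt6 {K : Type*} [Field K] {G : Type*} [AddGroup G]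
    (r l h : G → K)
    (hr1 : r 0 = 1) (hradd : ∀ m n, r (m + n) = r m * r n) (hrne : ∀ m, r m ≠ 0)
    (hl1 : l 0 = 1) (hladd : ∀ m n, l (m + n) = l m * l n) (hlne : ∀ m, l m ≠ 0)
    (hcoc : ∀ m n, h (m + n) = h m * r n + l m * h n)
    (h0 : h 0 = 0)
    (u : G) (hu : ∀ g : G, u + g = g + u)
    (ξ : K) (hξ : ξ ≠ 0) (hxirl : ξ ^ 2 * (r u * l u) = 1)
    (hhu : h u ≠ 0)
    (m : G) (hm : h (m - u) + ξ * h m = 0) :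
    h ((u - m) - u) + ξ * h (u - m) = 0 :=
  stmt6_general r l h hr1 hradd hlne hcoc h0 u hu ξ hxirl m hm
end

section
/- Assume h(ū) ≠ 0. If m, n ∈ G_{1/2} then h(m + n - ū) = 0, i.e. m + n - ū ∈ G₀. -/
/-!
Expanding `h m` along `m = (m - u) + u` in both orders turns the defining equation of
`G_{1/2}` into two linear relations: `h m (1 + ξ r u) l u = h u l m`, and, using
`ξ² r u l u = 1`, `r m = ξ r u l m`. The first shows `h` is proportional to `l` on
`G_{1/2}`; expanding `h (m + n - u)` along `(m - u) + n` then gives a multiple of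
`1 - ξ² r u l u = 0`.
-/

section TwistedCocycle

variable {K G : Type*} [Field K] [AddGroup G] {r l h : G → K} {u : G} {ξ : K}

theorem cocycle_split_right (hcoc : ∀ m n, h (m + n) = h m * r n + l m * h n) (g : G) :
    h g = h (g - u) * r u + l (g - u) * h u := by
  simpa using hcoc (g - u) u

theorem cocycle_split_left (hcoc : ∀ m n, h (m + n) = h m * r n + l m * h n)
    (hu : ∀ g : G, u + g = g + u) (g : G) :
    h g = h u * r (g - u) + l u * h (g - u) := by
  simpa [hu (g - u)] using hcoc u (g - u)

theorem h_mul_eq_h_mul_l_of_half (hladd : ∀ m n, l (m + n) = l m * l n)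
    (hcoc : ∀ m n, h (m + n) = h m * r n + l m * h n)
    {m : G} (hm : h (m - u) + ξ * h m = 0) :
    h m * (1 + ξ * r u) * l u = h u * l m := by
  have hl : l m = l (m - u) * l u := by simpa using hladd (m - u) u
  linear_combination l u * cocycle_split_right hcoc m + r u * l u * hm - h u * hl

theorem r_eq_mul_l_of_half (hradd : ∀ m n, r (m + n) = r m * r n)
    (hladd : ∀ m n, l (m + n) = l m * l n)
    (hcoc : ∀ m n, h (m + n) = h m * r n + l m * h n)
    (hu : ∀ g : G, u + g = g + u) (hxirl : ξ ^ 2 * (r u * l u) = 1) (hhu : h u ≠ 0)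
    {m : G} (hm : h (m - u) + ξ * h m = 0) :
    r m = ξ * r u * l m := by
  have hr : r m = r (m - u) * r u := by simpa using hradd (m - u) u
  refine mul_left_cancel₀ hhu ?_
  -- `1 + ξ l u = ξ l u (1 + ξ r u)` because `ξ² r u l u = 1`
  linear_combination h u * hr - r u * cocycle_split_left hcoc hu m - r u * l u * hm
    + ξ * r u * h_mul_eq_h_mul_l_of_half hladd hcoc hm - r u * h m * hxirl

end TwistedCocycle

theorem stmt7_general {K : Type*} [Field K] {G : Type*} [AddGroup G]
    (r l h : G → K)
    (hradd : ∀ m n, r (m + n) = r m * r n)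
    (hladd : ∀ m n, l (m + n) = l m * l n) (hlne : ∀ m, l m ≠ 0)
    (hcoc : ∀ m n, h (m + n) = h m * r n + l m * h n)
    (u : G) (hu : ∀ g : G, u + g = g + u)
    (ξ : K) (hxirl : ξ ^ 2 * (r u * l u) = 1)
    (hhu : h u ≠ 0)
    (m n : G) (hm : h (m - u) + ξ * h m = 0) (hn : h (n - u) + ξ * h n = 0) :
    h (m + n - u) = 0 := by
  have hAm := h_mul_eq_h_mul_l_of_half hladd hcoc hm
  have hAn := h_mul_eq_h_mul_l_of_half hladd hcoc hn
  have hBn := r_eq_mul_l_of_half hradd hladd hcoc hu hxirl hhu hn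
  have hc : (1 + ξ * r u) * l u ≠ 0 := by
    intro h0
    apply mul_ne_zero hhu (hlne m)
    rw [← hAm, mul_assoc, h0, mul_zero]
  have hsplit : m + n - u = m - u + n := by
    rw [sub_eq_add_neg, sub_eq_add_neg, add_assoc, add_assoc, (AddCommute.neg_left (hu n)).eq]
  have hl : l m = l (m - u) * l u := by simpa using hladd (m - u) u
  refine (mul_eq_zero.mp ?_).resolve_left hc
  rw [hsplit, hcoc]
  linear_combination (1 + ξ * r u) * l u * r n * hm - ξ * r n * hAm + l (m - u) * hAn
    - ξ * h u * l m * hBn - ξ ^ 2 * r u * h u * l n * hl - l (m - u) * h u * l n * hxirl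

theorem stmt7 {K : Type*} [Field K] {G : Type*} [AddGroup G]
    (r l h : G → K)
    (hr1 : r 0 = 1) (hradd : ∀ m n, r (m + n) = r m * r n) (hrne : ∀ m, r m ≠ 0)
    (hl1 : l 0 = 1) (hladd : ∀ m n, l (m + n) = l m * l n) (hlne : ∀ m, l m ≠ 0)
    (hcoc : ∀ m n, h (m + n) = h m * r n + l m * h n)
    (h0 : h 0 = 0)
    (u : G) (hu : ∀ g : G, u + g = g + u)
    (ξ : K) (hξ : ξ ≠ 0) (hxirl : ξ ^ 2 * (r u * l u) = 1)
    (hhu : h u ≠ 0)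
    (m n : G) (hm : h (m - u) + ξ * h m = 0) (hn : h (n - u) + ξ * h n = 0) :
    h (m + n - u) = 0 :=
  stmt7_general r l h hradd hladd hlne hcoc u hu ξ hxirl hhu m n hm hn
end

section
/- Assume h(ū) ≠ 0 and m_{1/2} ∈ G_{1/2}. Then for j ∈ ℤ, m_{1/2} + j·ū ∈ G_{1/2} if and only if j·ū ∈ G₀, i.e. h(j·ū) = 0. -/
/-!
Write `a = m - u`. Expanding both terms of `h (m + w - u) + ξ * h (m + w)` with the cocycle rule
(using `m + w - u = a + w`, legitimate when `w` commutes with `u`) gives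
`(h a + ξ * h m) * r w + l a * (1 + ξ * l u) * h w`.
For `m ∈ G_{1/2}` and `w = j • u` the first summand vanishes, so everything reduces to
`1 + ξ * l u ≠ 0`: otherwise `ξ * l u = -1` forces `ξ * r u = -1`, and the cocycle rule at
`m = a + u` turns the defining equation of `G_{1/2}` into `ξ * l a * h u = 0`, contradicting `h u ≠ 0`.
-/

section

variable {K G : Type*} [Field K] [AddGroup G] {r l h : G → K}

/-- `m ∈ G_{1/2}` means `shiftDefect h u ξ m = 0`. -/
def shiftDefect (h : G → K) (u : G) (ξ : K) (m : G) : K := h (m - u) + ξ * h m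

theorem shiftDefect_add_of_addCommute (hcoc : ∀ m n, h (m + n) = h m * r n + l m * h n)
    (hladd : ∀ m n, l (m + n) = l m * l n) {u w : G} (huw : AddCommute u w) (ξ : K) (m : G) :
    shiftDefect h u ξ (m + w) = shiftDefect h u ξ m * r w + l (m - u) * (1 + ξ * l u) * h w := by
  have hsub : m + w - u = m - u + w := by
    rw [sub_eq_add_neg, sub_eq_add_neg, add_assoc, add_assoc, (huw.neg_left).eq]
  have hlm : l m = l (m - u) * l u := by rw [← hladd, sub_add_cancel]
  simp only [shiftDefect]
  rw [hsub, hcoc (m - u) w, hcoc m w, hlm]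
  ring

theorem one_add_mul_ne_zero_of_shiftDefect_eq_zero
    (hcoc : ∀ m n, h (m + n) = h m * r n + l m * h n) (hlne : ∀ m, l m ≠ 0)
    {u : G} {ξ : K} (hxirl : ξ ^ 2 * (r u * l u) = 1) (hhu : h u ≠ 0) {m : G}
    (hm : shiftDefect h u ξ m = 0) : 1 + ξ * l u ≠ 0 := by
  intro hc
  have hxil : ξ * l u = -1 := by linear_combination hc
  have hxir : ξ * r u = -1 := by linear_combination ξ * r u * hc - hxirl
  have hξ : ξ ≠ 0 := left_ne_zero_of_mul (hxil.trans_ne (by norm_num))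
  have hexp : h m = h (m - u) * r u + l (m - u) * h u := by rw [← hcoc, sub_add_cancel]
  have hzero : ξ * l (m - u) * h u = 0 := by
    simp only [shiftDefect] at hm
    linear_combination hm - ξ * hexp - h (m - u) * hxir
  exact mul_ne_zero (mul_ne_zero hξ (hlne _)) hhu hzero

end

theorem stmt8_general {K : Type*} [Field K] {G : Type*} [AddGroup G]
    (r l h : G → K)
    (hladd : ∀ m n, l (m + n) = l m * l n) (hlne : ∀ m, l m ≠ 0)
    (hcoc : ∀ m n, h (m + n) = h m * r n + l m * h n)
    (u : G)
    (ξ : K) (hxirl : ξ ^ 2 * (r u * l u) = 1)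
    (hhu : h u ≠ 0)
    (m12 : G) (hm12 : h (m12 - u) + ξ * h m12 = 0) :
    ∀ j : ℤ, (h (m12 + j • u - u) + ξ * h (m12 + j • u) = 0) ↔ h (j • u) = 0 := by
  intro j
  have hshift := shiftDefect_add_of_addCommute hcoc hladd ((AddCommute.refl u).zsmul_right j) ξ m12
  have hξl := one_add_mul_ne_zero_of_shiftDefect_eq_zero hcoc hlne hxirl hhu hm12
  change shiftDefect h u ξ (m12 + j • u) = 0 ↔ _
  rw [hshift, show shiftDefect h u ξ m12 = 0 from hm12, zero_mul, zero_add]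
  simp [hlne, hξl]

theorem stmt8 {K : Type*} [Field K] {G : Type*} [AddGroup G]
    (r l h : G → K)
    (hr1 : r 0 = 1) (hradd : ∀ m n, r (m + n) = r m * r n) (hrne : ∀ m, r m ≠ 0)
    (hl1 : l 0 = 1) (hladd : ∀ m n, l (m + n) = l m * l n) (hlne : ∀ m, l m ≠ 0)
    (hcoc : ∀ m n, h (m + n) = h m * r n + l m * h n)
    (h0 : h 0 = 0)
    (u : G) (hu : ∀ g : G, u + g = g + u)
    (ξ : K) (hξ : ξ ≠ 0) (hxirl : ξ ^ 2 * (r u * l u) = 1)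
    (hhu : h u ≠ 0)
    (m12 : G) (hm12 : h (m12 - u) + ξ * h m12 = 0) :
    ∀ j : ℤ, (h (m12 + j • u - u) + ξ * h (m12 + j • u) = 0) ↔ h (j • u) = 0 :=
  stmt8_general r l h hladd hlne hcoc u ξ hxirl hhu m12 hm12
end

section
/- For any m ∈ G and any non-negative integer j, setting n = 2j+1, one has ∑_{k=0}^{n-1} ξ^{n-1-k} h(m - k·ū) = r₁^{-j} h(m - j·ū) · ∑_{k=0}^{n-1} (ξ r₁)^k. -/
/-!
Put `p = m - j • u`, so that `m - k • u = p + (j - k) • u`. The cocycle identity splits the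
`k`-th term into an `h p`-part, which adds up to the geometric sum on the right, and an
`l p`-part proportional to `φ (j - k)`, where `φ t = ξ ^ t * h (t • u)`. Since
`h (-g) = -(r (-g) * l (-g) * h g)` and `ξ ^ 2 * r u * l u = 1`, the function `φ` is odd, and
`φ 0 = 0`, so the `l p`-parts cancel in pairs `k ↔ 2 j - k`.
-/

open Finset

theorem Function.Odd.sum_range_sub_eq_zero {M : Type*} [AddCommGroup M] {f : ℤ → M}
    (hf : f.Odd) (h0 : f 0 = 0) (j : ℕ) :
    ∑ k ∈ range (2 * j + 1), f ((j : ℤ) - k) = 0 := by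
  refine sum_involution (fun k _ ↦ 2 * j - k) (fun k hk ↦ ?_) (fun k _ hne hfix ↦ ?_)
    (fun k _ ↦ by simp only [mem_range]; omega) (fun k hk ↦ by simp only [mem_range] at hk; omega)
  · rw [mem_range] at hk
    rw [show (j : ℤ) - (2 * j - k : ℕ) = -((j : ℤ) - k) by omega, hf, add_neg_cancel]
  · rw [show (j : ℤ) - k = 0 by omega] at hne
    exact hne h0

namespace AddChar

variable {K G : Type*} [Field K] [AddGroup G] {r l : AddChar G K} {h : G → K}

theorem cocycle_neg (hcoc : ∀ m n, h (m + n) = h m * r n + l m * h n) (h0 : h 0 = 0) (g : G) :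
    h (-g) = -(r (-g) * l (-g) * h g) := by
  have hl : l (-g) * l g = 1 := by rw [← map_add_eq_mul, neg_add_cancel, map_zero_eq_one]
  have := hcoc g (-g)
  rw [add_neg_cancel, h0] at this
  linear_combination (-l (-g)) * this - h (-g) * hl

theorem odd_zpow_mul_cocycle_zsmul (hcoc : ∀ m n, h (m + n) = h m * r n + l m * h n)
    (h0 : h 0 = 0) {u : G} {ξ : K} (hξ : ξ ^ 2 * (r u * l u) = 1) :
    Function.Odd fun t : ℤ ↦ ξ ^ t * h (t • u) := by
  have hξ0 : ξ ≠ 0 := by rintro rfl; simp at hξ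
  have hrl : r u * l u = (ξ ^ 2)⁻¹ := eq_inv_of_mul_eq_one_right hξ
  intro t
  simp only [neg_zsmul, cocycle_neg hcoc h0, map_neg_eq_inv, map_zsmul_eq_zpow, ← mul_inv,
    ← mul_zpow, hrl, inv_zpow', zpow_neg, ← zpow_natCast, ← zpow_mul]
  rw [zpow_mul', zpow_natCast]
  field_simp

theorem zpow_mul_cocycle_add_zsmul (hcoc : ∀ m n, h (m + n) = h m * r n + l m * h n)
    {ξ : K} (hξ : ξ ≠ 0) (p u : G) (a b : ℤ) :
    ξ ^ (a + b) * h (p + b • u)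
      = (r u)⁻¹ ^ a * h p * (ξ * r u) ^ (a + b) + ξ ^ a * l p * (ξ ^ b * h (b • u)) := by
  have hr : r u ≠ 0 := (r.val_isUnit u).ne_zero
  rw [hcoc, map_zsmul_eq_zpow, mul_zpow, zpow_add₀ hξ, zpow_add₀ hr, inv_zpow]
  field_simp

end AddChar

open AddChar in
theorem stmt9_general {K : Type*} [Field K] {G : Type*} [AddGroup G]
    (r l h : G → K)
    (hr1 : r 0 = 1) (hradd : ∀ m n, r (m + n) = r m * r n)
    (hl1 : l 0 = 1) (hladd : ∀ m n, l (m + n) = l m * l n)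
    (hcoc : ∀ m n, h (m + n) = h m * r n + l m * h n)
    (h0 : h 0 = 0)
    (u : G)
    (ξ : K) (hξ : ξ ≠ 0) (hxirl : ξ ^ 2 * (r u * l u) = 1) :
    ∀ (m : G) (j : ℕ),
      ∑ k ∈ Finset.range (2 * j + 1), ξ ^ (2 * j - k) * h (m - k • u)
        = ((r u)⁻¹) ^ j * h (m - j • u) * ∑ k ∈ Finset.range (2 * j + 1), (ξ * r u) ^ k := by
  let χr : AddChar G K := ⟨r, hr1, hradd⟩
  let χl : AddChar G K := ⟨l, hl1, hladd⟩
  intro m j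
  set p := m - j • u
  have hterm : ∀ k ∈ range (2 * j + 1), ξ ^ (2 * j - k) * h (m - k • u)
      = (r u)⁻¹ ^ j * h p * (ξ * r u) ^ (2 * j - k)
        + ξ ^ j * l p * (ξ ^ ((j : ℤ) - k) * h (((j : ℤ) - k) • u)) := by
    intro k hk
    have hk : ((2 * j - k : ℕ) : ℤ) = j + ((j : ℤ) - k) := by rw [mem_range] at hk; omega
    have hm : p + ((j : ℤ) - k) • u = m - k • u := by
      rw [sub_zsmul, natCast_zsmul, natCast_zsmul, ← sub_eq_add_neg, sub_add_sub_cancel]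
    have := zpow_mul_cocycle_add_zsmul (r := χr) (l := χl) hcoc hξ p u j (j - k)
    simp only [← hk, hm, zpow_natCast] at this
    exact this
  rw [sum_congr rfl hterm, sum_add_distrib, ← mul_sum, ← mul_sum,
    (odd_zpow_mul_cocycle_zsmul (r := χr) (l := χl) hcoc h0 hxirl).sum_range_sub_eq_zero
      (by simp [h0]) j,
    mul_zero, add_zero, ← sum_range_reflect (fun k ↦ (ξ * r u) ^ k), add_tsub_cancel_right]

theorem stmt9 {K : Type*} [Field K] {G : Type*} [AddGroup G]
    (r l h : G → K)
    (hr1 : r 0 = 1) (hradd : ∀ m n, r (m + n) = r m * r n) (hrne : ∀ m, r m ≠ 0)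
    (hl1 : l 0 = 1) (hladd : ∀ m n, l (m + n) = l m * l n) (hlne : ∀ m, l m ≠ 0)
    (hcoc : ∀ m n, h (m + n) = h m * r n + l m * h n)
    (h0 : h 0 = 0)
    (u : G) (hu : ∀ g : G, u + g = g + u)
    (ξ : K) (hξ : ξ ≠ 0) (hxirl : ξ ^ 2 * (r u * l u) = 1) :
    ∀ (m : G) (j : ℕ),
      ∑ k ∈ Finset.range (2 * j + 1), ξ ^ (2 * j - k) * h (m - k • u)
        = ((r u)⁻¹) ^ j * h (m - j • u) * ∑ k ∈ Finset.range (2 * j + 1), (ξ * r u) ^ k :=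
  stmt9_general r l h hr1 hradd hl1 hladd hcoc h0 u ξ hξ hxirl
end

section
/- For any m ∈ G and any non-negative integer j, setting n = 2j+2, one has ∑_{k=0}^{n-1} ξ^{n-1-k} h(m - k·ū) = r₁^{-j} ( h(m - (j+1)·ū) + ξ h(m - j·ū) ) · ∑_{k=0}^{j} (ξ r₁)^{2k}. -/
/-!
Write `a = r ū` and `g k = a ^ k * h (m - k • ū)`. Applying the cocycle identity to
`(m - (k + 1) • ū) + ū`, and using `ξ² a l(ū) = 1` to see that `k ↦ l (m - (k + 1) • ū)` is
geometric with ratio `ξ² a`, shows that `g` has geometric increments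
`g (k + 1) - g k = -l (m - ū) h (ū) (ξ a) ^ (2 k)`. After multiplying by `a ^ (2 j + 1)`, the
claim becomes a ring identity for any sequence with such increments, proved by induction on `j`
by splitting off the first two terms of the sum and applying the induction hypothesis to
`k ↦ g (k + 2)`.
-/

open Finset

theorem sum_range_pow_sub_mul_eq_of_succ_eq_add {R : Type*} [CommRing R] (x c : R) (g : ℕ → R)
    (hg : ∀ k, g (k + 1) = g k + c * x ^ (2 * k)) (j : ℕ) :
    ∑ k ∈ range (2 * j + 2), x ^ (2 * j + 1 - k) * g k
      = (g (j + 1) + x * g j) * ∑ k ∈ range (j + 1), x ^ (2 * k) := by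
  induction j generalizing c g with
  | zero =>
    simp only [mul_zero, zero_add, sum_range_succ, range_one, sum_singleton, tsub_zero, pow_one,
      tsub_self, pow_zero, one_mul, mul_one]
    ring
  | succ j ih =>
    have hg_closed : ∀ n, g n = g 0 + c * ∑ i ∈ range n, x ^ (2 * i) := fun n => by
      have := sum_range_sub g n
      simp only [hg, add_sub_cancel_left] at this
      rw [mul_sum, this]; ring
    have hgeom : ∑ i ∈ range (j + 1), x ^ (2 * i) + x ^ (2 * (j + 1))
        = 1 + x ^ 2 * ∑ i ∈ range (j + 1), x ^ (2 * i) := by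
      rw [← sum_range_succ, sum_range_succ', mul_sum, add_comm, mul_zero, pow_zero]
      exact congrArg _ (sum_congr rfl fun i _ => by ring)
    have hshift := ih (c * x ^ 4) (fun k => g (k + 2)) fun k => by
      rw [show k + 1 + 2 = k + 2 + 1 by ring, hg]; ring
    rw [show 2 * (j + 1) + 2 = 2 * j + 2 + 1 + 1 by ring, sum_range_succ', sum_range_succ',
      sum_range_succ _ (j + 1)]
    have hexp : ∀ k ∈ range (2 * j + 2),
        x ^ (2 * (j + 1) + 1 - (k + 1 + 1)) * g (k + 1 + 1) = x ^ (2 * j + 1 - k) * g (k + 2) :=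
      fun k _ => by rw [show 2 * (j + 1) + 1 - (k + 1 + 1) = 2 * j + 1 - k by omega]
    rw [sum_congr rfl hexp, hshift, show 2 * (j + 1) + 1 - (0 + 1) = 2 * (j + 1) by omega,
      Nat.sub_zero, show j + 1 + 2 = j + 2 + 1 by ring, hg (j + 2), hg (j + 1),
      hg_closed (j + 1), hg 0]
    linear_combination (-c * x ^ (2 * (j + 1))) * hgeom

theorem sub_succ_nsmul {G : Type*} [AddGroup G] (m u : G) (k : ℕ) :
    m - (k + 1) • u = m - k • u - u := by
  rw [succ_nsmul', sub_add_eq_sub_sub_swap]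

section Cocycle

variable {K G : Type*} [CommRing K] [AddGroup G] {r l h : G → K} {u : G} {ξ : K}

theorem map_sub_succ_nsmul_eq_mul_pow (hladd : ∀ m n, l (m + n) = l m * l n)
    (hxirl : ξ ^ 2 * (r u * l u) = 1) (m : G) (k : ℕ) :
    l (m - (k + 1) • u) = l (m - u) * (ξ ^ 2 * r u) ^ k := by
  induction k with
  | zero => simp only [zero_add, one_smul, pow_zero, mul_one]
  | succ k ih =>
    have hstep := hladd (m - (k + 1 + 1) • u) u
    rw [sub_succ_nsmul m u (k + 1), sub_add_cancel] at hstep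
    rw [sub_succ_nsmul m u (k + 1)]
    linear_combination (-l (m - (k + 1) • u - u)) * hxirl - ξ ^ 2 * r u * hstep + ξ ^ 2 * r u * ih

theorem pow_mul_apply_sub_succ_nsmul (hladd : ∀ m n, l (m + n) = l m * l n)
    (hcoc : ∀ m n, h (m + n) = h m * r n + l m * h n)
    (hxirl : ξ ^ 2 * (r u * l u) = 1) (m : G) (k : ℕ) :
    r u ^ (k + 1) * h (m - (k + 1) • u)
      = r u ^ k * h (m - k • u) + -(l (m - u) * h u) * (ξ * r u) ^ (2 * k) := by
  have hstep := hcoc (m - (k + 1) • u) u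
  rw [sub_succ_nsmul, sub_add_cancel, ← sub_succ_nsmul,
    map_sub_succ_nsmul_eq_mul_pow hladd hxirl] at hstep
  linear_combination (-r u ^ k) * hstep

end Cocycle

theorem stmt10_general {K : Type*} [Field K] {G : Type*} [AddGroup G]
    (r l h : G → K)
    (hrne : ∀ m, r m ≠ 0)
    (hladd : ∀ m n, l (m + n) = l m * l n)
    (hcoc : ∀ m n, h (m + n) = h m * r n + l m * h n)
    (u : G)
    (ξ : K) (hxirl : ξ ^ 2 * (r u * l u) = 1) :
    ∀ (m : G) (j : ℕ),
      ∑ k ∈ Finset.range (2 * j + 2), ξ ^ (2 * j + 1 - k) * h (m - k • u)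
        = ((r u)⁻¹) ^ j * (h (m - (j + 1) • u) + ξ * h (m - j • u))
            * ∑ k ∈ Finset.range (j + 1), (ξ * r u) ^ (2 * k) := by
  intro m j
  have hru := hrne u
  have key := sum_range_pow_sub_mul_eq_of_succ_eq_add (ξ * r u) _
    (fun k => r u ^ k * h (m - k • u)) (pow_mul_apply_sub_succ_nsmul hladd hcoc hxirl m) j
  have hterm : ∀ k ∈ range (2 * j + 2), (ξ * r u) ^ (2 * j + 1 - k) * (r u ^ k * h (m - k • u))
      = r u ^ (2 * j + 1) * (ξ ^ (2 * j + 1 - k) * h (m - k • u)) := fun k hk => by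
    rw [mul_pow, pow_sub₀ _ hru (Nat.le_of_lt_succ (mem_range.mp hk))]
    field_simp
  rw [sum_congr rfl hterm, ← mul_sum] at key
  apply mul_left_cancel₀ (pow_ne_zero (2 * j + 1) hru)
  rw [key, inv_pow]
  field_simp
  ring

theorem stmt10 {K : Type*} [Field K] {G : Type*} [AddGroup G]
    (r l h : G → K)
    (hr1 : r 0 = 1) (hradd : ∀ m n, r (m + n) = r m * r n) (hrne : ∀ m, r m ≠ 0)
    (hl1 : l 0 = 1) (hladd : ∀ m n, l (m + n) = l m * l n) (hlne : ∀ m, l m ≠ 0)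
    (hcoc : ∀ m n, h (m + n) = h m * r n + l m * h n)
    (h0 : h 0 = 0)
    (u : G) (hu : ∀ g : G, u + g = g + u)
    (ξ : K) (hξ : ξ ≠ 0) (hxirl : ξ ^ 2 * (r u * l u) = 1) :
    ∀ (m : G) (j : ℕ),
      ∑ k ∈ Finset.range (2 * j + 2), ξ ^ (2 * j + 1 - k) * h (m - k • u)
        = ((r u)⁻¹) ^ j * (h (m - (j + 1) • u) + ξ * h (m - j • u))
            * ∑ k ∈ Finset.range (j + 1), (ξ * r u) ^ (2 * k) :=
  stmt10_general r l h hrne hladd hcoc u ξ hxirl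
end

section
/- Assume h(ū) ≠ 0 and that ξ r₁ is not a root of unity. Then for a positive integer n, h(n·ū) = 0 never holds; in fact h(j·ū) = 0 for j ∈ ℤ if and only if j = 0. -/
/-!
Induction on `n` with the cocycle identity `h (m + u) = h m * r u + l m * h u` gives
`h (n • u) * (l u - r u) = h u * (l u ^ n - r u ^ n)`, so `h (n • u) = 0` forces `l u ^ n = r u ^ n`,
and then `(ξ * r u) ^ (2 * n) = (ξ ^ 2 * r u * l u) ^ n = 1`. Negative multiples reduce to positive
ones because `0 = h (g + -g) = h g * r (-g) + l g * h (-g)` with `l g ≠ 0`.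
-/

section Cocycle

variable {K G : Type*} [Field K]

theorem nsmul_eq_pow_of_map_add [AddMonoid G] (l : G → K) (hl1 : l 0 = 1)
    (hladd : ∀ m n, l (m + n) = l m * l n) (g : G) (n : ℕ) : l (n • g) = l g ^ n := by
  induction n with
  | zero => simpa using hl1
  | succ n ih => rw [succ_nsmul, hladd, ih, pow_succ]

theorem cocycle_nsmul_mul_sub [AddMonoid G] (r l h : G → K) (hl1 : l 0 = 1)
    (hladd : ∀ m n, l (m + n) = l m * l n) (hcoc : ∀ m n, h (m + n) = h m * r n + l m * h n)
    (h0 : h 0 = 0) (g : G) (n : ℕ) :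
    h (n • g) * (l g - r g) = h g * (l g ^ n - r g ^ n) := by
  induction n with
  | zero => simp [h0]
  | succ n ih =>
    rw [succ_nsmul, hcoc, nsmul_eq_pow_of_map_add l hl1 hladd]
    linear_combination r g * ih

theorem cocycle_eq_zero_of_neg [AddGroup G] (r l h : G → K) (hlne : ∀ m, l m ≠ 0)
    (hcoc : ∀ m n, h (m + n) = h m * r n + l m * h n) (h0 : h 0 = 0) {g : G}
    (hg : h (-g) = 0) : h g = 0 := by
  have hsum := hcoc (-g) g
  rw [neg_add_cancel, h0, hg, zero_mul, zero_add] at hsum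
  exact (mul_eq_zero.mp hsum.symm).resolve_left (hlne _)

theorem cocycle_neg_eq_zero_iff [AddGroup G] (r l h : G → K) (hlne : ∀ m, l m ≠ 0)
    (hcoc : ∀ m n, h (m + n) = h m * r n + l m * h n) (h0 : h 0 = 0) (g : G) :
    h (-g) = 0 ↔ h g = 0 :=
  ⟨cocycle_eq_zero_of_neg r l h hlne hcoc h0, fun hg =>
    cocycle_eq_zero_of_neg r l h hlne hcoc h0 (g := -g) (by rwa [neg_neg])⟩

end Cocycle

theorem pow_ne_pow_of_not_root {K : Type*} [Field K] {ξ a b : K} (hab : ξ ^ 2 * (a * b) = 1)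
    (hroot : ∀ k : ℤ, k ≠ 0 → (ξ * a) ^ k ≠ 1) {n : ℕ} (hn : n ≠ 0) : b ^ n ≠ a ^ n := by
  intro hba
  refine hroot (2 * n) (by positivity) ?_
  calc (ξ * a) ^ (2 * n : ℤ) = (ξ ^ 2 * (a * a)) ^ n := by
        rw [zpow_mul, zpow_natCast, zpow_ofNat]; ring
    _ = (ξ ^ 2 * (a * b)) ^ n := by simp only [mul_pow, hba]
    _ = 1 := by rw [hab, one_pow]

theorem stmt11_general {K : Type*} [Field K] {G : Type*} [AddGroup G]
    (r l h : G → K)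
    (hl1 : l 0 = 1) (hladd : ∀ m n, l (m + n) = l m * l n) (hlne : ∀ m, l m ≠ 0)
    (hcoc : ∀ m n, h (m + n) = h m * r n + l m * h n)
    (h0 : h 0 = 0)
    (u : G)
    (ξ : K) (hxirl : ξ ^ 2 * (r u * l u) = 1)
    (hhu : h u ≠ 0)
    (hroot : ∀ k : ℤ, k ≠ 0 → (ξ * r u) ^ k ≠ 1) :
    ∀ j : ℤ, h (j • u) = 0 ↔ j = 0 := by
  have hnat : ∀ n : ℕ, h (n • u) = 0 ↔ n = 0 := by
    refine fun n => ⟨fun hz => by_contra fun hn => ?_, fun hn => by simp [hn, h0]⟩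
    have key := cocycle_nsmul_mul_sub r l h hl1 hladd hcoc h0 u n
    rw [hz, zero_mul, eq_comm, mul_eq_zero, sub_eq_zero] at key
    exact key.elim hhu (pow_ne_pow_of_not_root hxirl hroot hn)
  intro j
  rcases Int.natAbs_eq j with hj | hj <;> rw [hj]
  · rw [natCast_zsmul, hnat, Int.natCast_eq_zero]
  · rw [neg_zsmul, cocycle_neg_eq_zero_iff r l h hlne hcoc h0, natCast_zsmul, hnat, neg_eq_zero,
      Int.natCast_eq_zero]

theorem stmt11 {K : Type*} [Field K] {G : Type*} [AddGroup G]
    (r l h : G → K)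
    (hr1 : r 0 = 1) (hradd : ∀ m n, r (m + n) = r m * r n) (hrne : ∀ m, r m ≠ 0)
    (hl1 : l 0 = 1) (hladd : ∀ m n, l (m + n) = l m * l n) (hlne : ∀ m, l m ≠ 0)
    (hcoc : ∀ m n, h (m + n) = h m * r n + l m * h n)
    (h0 : h 0 = 0)
    (u : G) (hu : ∀ g : G, u + g = g + u)
    (ξ : K) (hξ : ξ ≠ 0) (hxirl : ξ ^ 2 * (r u * l u) = 1)
    (hhu : h u ≠ 0)
    (hroot : ∀ k : ℤ, k ≠ 0 → (ξ * r u) ^ k ≠ 1) :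
    ∀ j : ℤ, h (j • u) = 0 ↔ j = 0 :=
  stmt11_general r l h hl1 hladd hlne hcoc h0 u ξ hxirl hhu hroot
end

section
/- Assume h(ū) ≠ 0, (ξ r₁)² ≠ 1, and ξ r₁ has finite multiplicative order N. Then for a positive integer n, one has h((n-1)·ū) + ξ h(n·ū) = 0 if and only if N divides 2n - 1. -/
/-!
Put `a k = h (k • u)` and `q = ξ r(u)`. The cocycle identity gives the recurrence
`a (k + 1) = a k r(u) + l(u)^k h(u)`, and with `ξ² r(u) l(u) = 1` an induction on `n` yields
`a n + ξ a (n + 1) = h(u) ξ l(u)^n (1 + q + ⋯ + q^(2n))`.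
Since `q ≠ 1`, the geometric sum vanishes exactly when `q^(2n+1) = 1`, i.e. when the order of `q`
divides `2n + 1`.
-/

open Finset

theorem geom_sum_eq_zero_iff_pow_eq_one {K : Type*} [Field K] {q : K} (hq : q ≠ 1) (m : ℕ) :
    ∑ j ∈ range m, q ^ j = 0 ↔ q ^ m = 1 := by
  rw [geom_sum_eq hq, div_eq_zero_iff, sub_eq_zero, sub_eq_zero, or_iff_left hq]

theorem add_mul_succ_eq_geom_sum {R : Type*} [CommRing R] {a : ℕ → R} {r l c ξ : R}
    (ha0 : a 0 = 0) (ha : ∀ k, a (k + 1) = a k * r + l ^ k * c) (hrel : ξ ^ 2 * (r * l) = 1)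
    (n : ℕ) :
    a n + ξ * a (n + 1) = c * ξ * l ^ n * ∑ j ∈ range (2 * n + 1), (ξ * r) ^ j := by
  induction n with
  | zero => simp [ha, ha0, mul_comm]
  | succ n ih =>
    rw [show 2 * (n + 1) + 1 = 2 * n + 1 + 1 + 1 by ring, geom_sum_succ, geom_sum_succ, ha (n + 1),
      pow_succ]
    linear_combination r * ih + ha n
      - c * l ^ n * (ξ * r * ∑ j ∈ range (2 * n + 1), (ξ * r) ^ j + 1) * hrel

section
variable {G : Type*} [AddMonoid G]

theorem map_nsmul_eq_pow {M : Type*} [Monoid M] {l : G → M} (hl0 : l 0 = 1)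
    (hl : ∀ m n, l (m + n) = l m * l n) (u : G) (k : ℕ) : l (k • u) = l u ^ k := by
  induction k with
  | zero => simpa using hl0
  | succ k ih => rw [succ_nsmul, hl, ih, pow_succ]

theorem cocycle_nsmul_succ {R : Type*} [Semiring R] {r l h : G → R} (hl0 : l 0 = 1)
    (hl : ∀ m n, l (m + n) = l m * l n) (hcoc : ∀ m n, h (m + n) = h m * r n + l m * h n)
    (u : G) (k : ℕ) : h ((k + 1) • u) = h (k • u) * r u + l u ^ k * h u := by
  rw [succ_nsmul, hcoc, map_nsmul_eq_pow hl0 hl]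

end

theorem stmt13_general {K : Type*} [Field K] {G : Type*} [AddGroup G]
    (r l h : G → K)
    (hl1 : l 0 = 1) (hladd : ∀ m n, l (m + n) = l m * l n) (hlne : ∀ m, l m ≠ 0)
    (hcoc : ∀ m n, h (m + n) = h m * r n + l m * h n)
    (h0 : h 0 = 0)
    (u : G)
    (ξ : K) (hξ : ξ ≠ 0) (hxirl : ξ ^ 2 * (r u * l u) = 1)
    (hhu : h u ≠ 0)
    (hsq : (ξ * r u) ^ 2 ≠ 1)
    (N : ℕ) (hord : orderOf (ξ * r u) = N) :
    ∀ n : ℕ, 0 < n →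
      (h ((n - 1) • u) + ξ * h (n • u) = 0 ↔ N ∣ 2 * n - 1) := by
  intro n hn
  obtain ⟨m, rfl⟩ := Nat.exists_eq_add_of_lt hn
  have hq : ξ * r u ≠ 1 := fun h1 => hsq (by rw [h1, one_pow])
  have hsum := add_mul_succ_eq_geom_sum (a := fun k => h (k • u)) (by simpa using h0)
    (cocycle_nsmul_succ hl1 hladd hcoc u) hxirl m
  simp only [zero_add, Nat.add_sub_cancel] at hsum ⊢
  rw [hsum, show 2 * (m + 1) - 1 = 2 * m + 1 by omega, ← hord, orderOf_dvd_iff_pow_eq_one,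
    mul_eq_zero, or_iff_right (mul_ne_zero (mul_ne_zero hhu hξ) (pow_ne_zero _ (hlne u))),
    geom_sum_eq_zero_iff_pow_eq_one hq]

theorem stmt13 {K : Type*} [Field K] {G : Type*} [AddGroup G]
    (r l h : G → K)
    (hr1 : r 0 = 1) (hradd : ∀ m n, r (m + n) = r m * r n) (hrne : ∀ m, r m ≠ 0)
    (hl1 : l 0 = 1) (hladd : ∀ m n, l (m + n) = l m * l n) (hlne : ∀ m, l m ≠ 0)
    (hcoc : ∀ m n, h (m + n) = h m * r n + l m * h n)
    (h0 : h 0 = 0)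
    (u : G) (hu : ∀ g : G, u + g = g + u)
    (ξ : K) (hξ : ξ ≠ 0) (hxirl : ξ ^ 2 * (r u * l u) = 1)
    (hhu : h u ≠ 0)
    (hsq : (ξ * r u) ^ 2 ≠ 1)
    (N : ℕ) (hN : 0 < N) (hord : orderOf (ξ * r u) = N) :
    ∀ n : ℕ, 0 < n →
      (h ((n - 1) • u) + ξ * h (n • u) = 0 ↔ N ∣ 2 * n - 1) :=
  stmt13_general r l h hl1 hladd hlne hcoc h0 u ξ hξ hxirl hhu hsq N hord
end

section
/- Define for m ∈ G and positive integer n the quantity P(m,n) = ∑_{k=0}^{n-1} ξ^{n-1-k} h(m - k·ū), and define d(m) as the least positive integer n with P(m,n) = 0 (when it exists). Assume h(ū) ≠ 0 and ξ r₁ is not a root of unity. Then for m₀ ∈ G with h(m₀) = 0 and any j ≥ 0, d(m₀ + j·ū) = 2j + 1. -/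
/-!
Since `u` is central, comparing the cocycle identity for `x + u` and `u + x` gives
`h x * (r u - l u) = h u * (r x - l x)`, and `r u ≠ l u` because `(ξ r u)² = r u / l u`
is not `1`. So `h` is a multiple of `r - l`; in particular `h m₀ = 0` forces `r m₀ = l m₀`.
With `q = ξ r u` (so that `ξ l u = q⁻¹`), every term of `P(m₀ + j u, N + 1)` becomes a multiple
of `q ^ (j - k) - q ^ (k - j)`, and the sum equals a nonzero multiple of
`(q ^ (2 j) - q ^ N) (1 + q + ⋯ + q ^ N)`. As `q` is not a root of unity, this vanishes
iff `N = 2 j`.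
-/

open Finset

theorem map_add_nsmul_of_map_add {G M : Type*} [AddMonoid G] [Monoid M] {f : G → M}
    (hf : ∀ m n, f (m + n) = f m * f n) (a u : G) (k : ℕ) :
    f (a + k • u) = f a * f u ^ k := by
  induction k with
  | zero => simp
  | succ k ih => rw [succ_nsmul, ← add_assoc, hf, ih, pow_succ, mul_assoc]

theorem map_sub_nsmul_of_map_add {G M : Type*} [AddGroup G] [GroupWithZero M] {f : G → M}
    (hf : ∀ m n, f (m + n) = f m * f n) {u : G} (hu : f u ≠ 0) (a : G) (k : ℕ) :
    f (a - k • u) = f a / f u ^ k := by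
  rw [eq_div_iff (pow_ne_zero _ hu), ← map_add_nsmul_of_map_add hf, sub_add_cancel]

theorem cocycle_mul_sub_eq_of_add_comm {K G : Type*} [CommRing K] [Add G] {r l h : G → K}
    (hcoc : ∀ m n, h (m + n) = h m * r n + l m * h n) {u x : G} (hux : u + x = x + u) :
    h x * (r u - l u) = h u * (r x - l x) := by
  have hxu := hcoc x u
  have hux' := hcoc u x
  rw [hux] at hux'
  linear_combination hux' - hxu

theorem sum_range_succ_div_pow_sub_mul {K : Type*} [Field K] {q : K} (hq : q ≠ 0) (j N : ℕ) :
    ∑ k ∈ range (N + 1), (q ^ j / q ^ k - q ^ k / q ^ j) * (q ^ j * q ^ N)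
      = (q ^ (2 * j) - q ^ N) * ∑ k ∈ range (N + 1), q ^ k := by
  have hreflect : ∑ k ∈ range (N + 1), q ^ N / q ^ k = ∑ k ∈ range (N + 1), q ^ k := by
    rw [← sum_range_reflect]
    refine sum_congr rfl fun k hk => ?_
    rw [mem_range] at hk
    rw [div_eq_iff (pow_ne_zero _ hq), ← pow_add]
    congr 1
    omega
  calc ∑ k ∈ range (N + 1), (q ^ j / q ^ k - q ^ k / q ^ j) * (q ^ j * q ^ N)
      = ∑ k ∈ range (N + 1), (q ^ (2 * j) * (q ^ N / q ^ k) - q ^ N * q ^ k) := by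
        refine sum_congr rfl fun k _ => ?_
        field_simp
        ring
    _ = _ := by rw [sum_sub_distrib, ← mul_sum, ← mul_sum, hreflect, sub_mul]

theorem pow_sub_mul_div_pow_sub_div_pow {K : Type*} [Field K] {ξ R L q : K} (hξ : ξ ≠ 0)
    (hR : ξ * R = q) (hL : ξ * L * q = 1) {k N : ℕ} (hk : k ≤ N) (j : ℕ) :
    ξ ^ (N - k) * (R ^ j / R ^ k - L ^ j / L ^ k) * ξ ^ j
      = ξ ^ N * (q ^ j / q ^ k - q ^ k / q ^ j) := by
  have hL0 : L ≠ 0 := right_ne_zero_of_mul (left_ne_zero_of_mul_eq_one hL)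
  have hR0 : R ≠ 0 := right_ne_zero_of_mul (hR ▸ right_ne_zero_of_mul_eq_one hL)
  calc ξ ^ (N - k) * (R ^ j / R ^ k - L ^ j / L ^ k) * ξ ^ j
      = ξ ^ N * ((ξ * R) ^ j / (ξ * R) ^ k - (ξ * L) ^ j / (ξ * L) ^ k) := by
        rw [pow_sub₀ _ hξ hk]
        field_simp
        ring
    _ = ξ ^ N * (q ^ j / q ^ k - q ^ k / q ^ j) := by
        rw [hR, eq_inv_of_mul_eq_one_left hL, inv_pow, inv_pow, inv_div_inv]

theorem pow_inj_of_orderOf_eq_zero₀ {M₀ : Type*} [GroupWithZero M₀] {q : M₀} (hq0 : q ≠ 0)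
    (hq : orderOf q = 0) {m n : ℕ} : q ^ m = q ^ n ↔ m = n := by
  have hunit : orderOf (Units.mk0 q hq0) = 0 := by rwa [← orderOf_units, Units.val_mk0]
  rw [← pow_inj_iff_of_orderOf_eq_zero hunit, Units.ext_iff, Units.val_pow_eq_pow_val,
    Units.val_pow_eq_pow_val, Units.val_mk0]

namespace Ambiskew

variable {K G : Type*} [Field K] [AddGroup G]

def P (ξ : K) (h : G → K) (u m : G) (n : ℕ) : K :=
  ∑ k ∈ range n, ξ ^ (n - 1 - k) * h (m - k • u)

section

variable {r l h : G → K} {ξ q : K} {u m₀ : G}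

theorem P_add_nsmul_succ_mul_eq (hcoc : ∀ m n, h (m + n) = h m * r n + l m * h n)
    (hradd : ∀ m n, r (m + n) = r m * r n) (hladd : ∀ m n, l (m + n) = l m * l n)
    (hu : ∀ g : G, u + g = g + u) (hξ : ξ ≠ 0) (hR : ξ * r u = q) (hL : ξ * l u * q = 1)
    (hm₀ : r m₀ = l m₀) (j N : ℕ) :
    P ξ h u (m₀ + j • u) (N + 1) * (r u - l u) * (ξ ^ j * (q ^ j * q ^ N))
      = h u * r m₀ * ξ ^ N * ((q ^ (2 * j) - q ^ N) * ∑ k ∈ range (N + 1), q ^ k) := by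
  have hL0 : l u ≠ 0 := right_ne_zero_of_mul (left_ne_zero_of_mul_eq_one hL)
  have hR0 : r u ≠ 0 := right_ne_zero_of_mul (hR ▸ right_ne_zero_of_mul_eq_one hL)
  rw [P, sum_mul, sum_mul, ← sum_range_succ_div_pow_sub_mul (right_ne_zero_of_mul_eq_one hL),
    mul_sum]
  refine sum_congr rfl fun k hk => ?_
  have hk : k ≤ N := Nat.lt_succ_iff.mp (mem_range.mp hk)
  rw [mul_assoc _ (h _), cocycle_mul_sub_eq_of_add_comm hcoc (hu _),
    map_sub_nsmul_of_map_add hradd hR0, map_sub_nsmul_of_map_add hladd hL0,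
    map_add_nsmul_of_map_add hradd, map_add_nsmul_of_map_add hladd, ← hm₀, Nat.add_sub_cancel]
  linear_combination
    (h u * r m₀ * (q ^ j * q ^ N)) * pow_sub_mul_div_pow_sub_div_pow hξ hR hL hk j

theorem P_add_nsmul_succ_eq_zero_iff (hcoc : ∀ m n, h (m + n) = h m * r n + l m * h n)
    (hradd : ∀ m n, r (m + n) = r m * r n) (hladd : ∀ m n, l (m + n) = l m * l n)
    (hu : ∀ g : G, u + g = g + u) (hξ : ξ ≠ 0) (hR : ξ * r u = q) (hL : ξ * l u * q = 1)
    (hq : orderOf q = 0) (hhu : h u ≠ 0) (hm₀ : h m₀ = 0) (hr₀ : r m₀ ≠ 0) (j N : ℕ) :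
    P ξ h u (m₀ + j • u) (N + 1) = 0 ↔ N = 2 * j := by
  have hq0 : q ≠ 0 := right_ne_zero_of_mul_eq_one hL
  have hrl : r u - l u ≠ 0 := by
    intro hrl
    refine orderOf_eq_zero_iff'.mp hq 2 two_pos ?_
    rw [← hL, ← hR, sub_eq_zero.mp hrl]
    ring
  have hrlm₀ : r m₀ = l m₀ := by
    have := cocycle_mul_sub_eq_of_add_comm hcoc (hu m₀)
    rw [hm₀, zero_mul, eq_comm, mul_eq_zero, sub_eq_zero] at this
    exact this.resolve_left hhu
  have hgeom : ∑ k ∈ range (N + 1), q ^ k ≠ 0 := by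
    intro hsum
    have := geom_sum_mul q (N + 1)
    rw [hsum, zero_mul, eq_comm, sub_eq_zero] at this
    exact orderOf_eq_zero_iff'.mp hq (N + 1) N.succ_pos this
  have key := P_add_nsmul_succ_mul_eq hcoc hradd hladd hu hξ hR hL hrlm₀ j N
  rw [← pow_inj_of_orderOf_eq_zero₀ hq0 hq]
  constructor
  · intro hP
    rw [hP, zero_mul, zero_mul, eq_comm] at key
    have hc : h u * r m₀ * ξ ^ N ≠ 0 := mul_ne_zero (mul_ne_zero hhu hr₀) (pow_ne_zero _ hξ)
    exact (sub_eq_zero.mp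
      ((mul_eq_zero.mp ((mul_eq_zero.mp key).resolve_left hc)).resolve_right hgeom)).symm
  · intro hD
    rw [← hD, sub_self, zero_mul, mul_zero, mul_assoc] at key
    have hc : (r u - l u) * (ξ ^ j * (q ^ j * q ^ N)) ≠ 0 :=
      mul_ne_zero hrl (mul_ne_zero (pow_ne_zero _ hξ) (mul_ne_zero (pow_ne_zero _ hq0)
        (pow_ne_zero _ hq0)))
    exact (mul_eq_zero.mp key).resolve_right hc

end

end Ambiskew

open Ambiskew in
theorem stmt14_general {K : Type*} [Field K] {G : Type*} [AddGroup G]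
    (r l h : G → K)
    (hradd : ∀ m n, r (m + n) = r m * r n) (hrne : ∀ m, r m ≠ 0)
    (hladd : ∀ m n, l (m + n) = l m * l n)
    (hcoc : ∀ m n, h (m + n) = h m * r n + l m * h n)
    (u : G) (hu : ∀ g : G, u + g = g + u)
    (ξ : K) (hξ : ξ ≠ 0) (hxirl : ξ ^ 2 * (r u * l u) = 1)
    (hhu : h u ≠ 0)
    (hroot : ∀ k : ℤ, k ≠ 0 → (ξ * r u) ^ k ≠ 1)
    (m0 : G) (hm0 : h m0 = 0) :
    ∀ j : ℕ,
      IsLeast {n : ℕ | 0 < n ∧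
        ∑ k ∈ Finset.range n, ξ ^ (n - 1 - k) * h (m0 + j • u - k • u) = 0} (2 * j + 1) := by
  intro j
  have hq : orderOf (ξ * r u) = 0 :=
    orderOf_eq_zero_iff'.mpr fun n hn => by simpa using hroot n (by omega)
  have hL : ξ * l u * (ξ * r u) = 1 := by rw [← hxirl]; ring
  have hP :=
    P_add_nsmul_succ_eq_zero_iff hcoc hradd hladd hu hξ rfl hL hq hhu hm0 (hrne m0) j
  refine ⟨⟨by omega, (hP (2 * j)).mpr rfl⟩, ?_⟩
  rintro n ⟨hn, hsum⟩
  obtain ⟨N, rfl⟩ := Nat.exists_eq_succ_of_ne_zero hn.ne'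
  have := (hP N).mp hsum
  omega

theorem stmt14 {K : Type*} [Field K] {G : Type*} [AddGroup G]
    (r l h : G → K)
    (hr1 : r 0 = 1) (hradd : ∀ m n, r (m + n) = r m * r n) (hrne : ∀ m, r m ≠ 0)
    (hl1 : l 0 = 1) (hladd : ∀ m n, l (m + n) = l m * l n) (hlne : ∀ m, l m ≠ 0)
    (hcoc : ∀ m n, h (m + n) = h m * r n + l m * h n)
    (h0 : h 0 = 0)
    (u : G) (hu : ∀ g : G, u + g = g + u)
    (ξ : K) (hξ : ξ ≠ 0) (hxirl : ξ ^ 2 * (r u * l u) = 1)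
    (hhu : h u ≠ 0)
    (hroot : ∀ k : ℤ, k ≠ 0 → (ξ * r u) ^ k ≠ 1)
    (m0 : G) (hm0 : h m0 = 0) :
    ∀ j : ℕ,
      IsLeast {n : ℕ | 0 < n ∧
        ∑ k ∈ Finset.range n, ξ ^ (n - 1 - k) * h (m0 + j • u - k • u) = 0} (2 * j + 1) :=
  stmt14_general r l h hradd hrne hladd hcoc u hu ξ hξ hxirl hhu hroot m0 hm0
end

section
/- With the same setup, suppose h(ū) ≠ 0 and ξ r₁ is not a root of unity. If m ∈ G satisfies h(m) = 0 or h(m - ū) + ξ h(m) = 0, then for every integer j < 0 there is no positive integer n with ∑_{k=0}^{n-1} ξ^{n-1-k} h(m + j·ū - k·ū) = 0; i.e. d(m + j·ū) does not exist (the module L(m + j·ū) is infinite-dimensional). -/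
/-!
Because `u` is central, comparing `h (u + g)` with `h (g + u)` shows that `h = c • (l - r)` with
`c = h u / (l u - r u)`, so `h (m + t • u) = c (l m λ ^ t - r m ρ ^ t)` for `ρ = r u`, `λ = l u`.
Put `q = ξ ρ`; then `ξ λ = q⁻¹` and the twisted sum collapses to
`c ξ ^ (n - 1 - j) q ^ (-j) [n]_q (l m - r m q ^ (2 j + 1 - n))`.
The hypothesis on `m` says `l m = r m q ^ s` with `s ∈ {0, -1}`, whereas `2 j + 1 - n ≤ -2` when
`j < 0`; since `q` is not a root of unity, no factor vanishes.
-/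

open Finset

section TwistedSum

variable {K : Type*} [Field K]

theorem geom_sum_ne_zero_of_pow_ne_one {q : K} {n : ℕ} (hq : q ≠ 1) (hqn : q ^ n ≠ 1) :
    ∑ k ∈ range n, q ^ k ≠ 0 := by
  rw [geom_sum_eq hq]
  exact div_ne_zero (sub_ne_zero.2 hqn) (sub_ne_zero.2 hq)

theorem sum_range_zpow_sub {q : K} (hq : q ≠ 0) (j : ℤ) (n : ℕ) :
    ∑ k ∈ range n, q ^ (j - k) = q ^ (j + 1 - n) * ∑ k ∈ range n, q ^ k := by
  rw [← sum_range_reflect, mul_sum]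
  refine sum_congr rfl fun k hk => ?_
  rw [← zpow_natCast, ← zpow_add₀ hq, Nat.cast_sub (by grind), Nat.cast_sub (by grind)]
  ring_nf

theorem sum_range_mul_zpow_sub_mul_zpow {q : K} (hq : q ≠ 0) (a b : K) (j : ℤ) (n : ℕ) :
    ∑ k ∈ range n, (a * q ^ ((k : ℤ) - j) - b * q ^ (j - k)) =
      q ^ (-j) * (∑ k ∈ range n, q ^ k) * (a - b * q ^ (2 * j + 1 - n)) := by
  have hfirst : ∀ k : ℕ, q ^ ((k : ℤ) - j) = q ^ (-j) * q ^ k := fun k => by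
    rw [← zpow_natCast, ← zpow_add₀ hq, neg_add_eq_sub]
  have hexp : q ^ (j + 1 - n) = q ^ (-j) * q ^ (2 * j + 1 - n) := by
    rw [← zpow_add₀ hq]; ring_nf
  simp only [sum_sub_distrib, ← mul_sum, hfirst, sum_range_zpow_sub hq, hexp]
  ring

theorem sum_range_pow_mul_zpow_sub {ξ ρ μ : K} (hξρμ : ξ ^ 2 * (ρ * μ) = 1) (a b : K) (j : ℤ)
    (n : ℕ) :
    ∑ k ∈ range n, ξ ^ (n - 1 - k) * (a * μ ^ (j - k) - b * ρ ^ (j - k)) =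
      ξ ^ ((n : ℤ) - 1 - j) * (ξ * ρ) ^ (-j) * (∑ k ∈ range n, (ξ * ρ) ^ k) *
        (a - b * (ξ * ρ) ^ (2 * j + 1 - n)) := by
  have hξ : ξ ≠ 0 := by rintro rfl; simp at hξρμ
  have hρ : ρ ≠ 0 := by rintro rfl; simp at hξρμ
  have hξμ : ξ * μ = (ξ * ρ)⁻¹ := eq_inv_of_mul_eq_one_left (by linear_combination hξρμ)
  calc ∑ k ∈ range n, ξ ^ (n - 1 - k) * (a * μ ^ (j - k) - b * ρ ^ (j - k))
      = ξ ^ ((n : ℤ) - 1 - j) *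
          ∑ k ∈ range n, (a * (ξ * ρ) ^ ((k : ℤ) - j) - b * (ξ * ρ) ^ (j - k)) := by
        rw [mul_sum]
        refine sum_congr rfl fun k hk => ?_
        have hsplit : ξ ^ (n - 1 - k) = ξ ^ ((n : ℤ) - 1 - j) * ξ ^ (j - k) := by
          rw [← zpow_natCast, ← zpow_add₀ hξ, Nat.cast_sub (by grind), Nat.cast_sub (by grind)]
          ring_nf
        have hμ : ξ ^ (j - k) * μ ^ (j - k) = (ξ * ρ) ^ ((k : ℤ) - j) := by
          rw [← mul_zpow, hξμ, inv_zpow', neg_sub]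
        rw [hsplit, ← hμ, mul_zpow ξ ρ]
        ring
    _ = _ := by rw [sum_range_mul_zpow_sub_mul_zpow (mul_ne_zero hξ hρ)]; ring

theorem mul_zpow_sub_mul_zpow_ne_zero {q b : K} (hq : q ≠ 0) (hb : b ≠ 0)
    (hroot : ∀ k : ℤ, k ≠ 0 → q ^ k ≠ 1) {s e : ℤ} (hse : s ≠ e) :
    b * q ^ s - b * q ^ e ≠ 0 := by
  have hsplit : b * q ^ s - b * q ^ e = b * q ^ e * (q ^ (s - e) - 1) := by
    rw [zpow_sub₀ hq]; field_simp
  rw [hsplit]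
  exact mul_ne_zero (mul_ne_zero hb (zpow_ne_zero _ hq))
    (sub_ne_zero.2 (hroot _ (sub_ne_zero.2 hse)))

theorem eq_mul_zpow_neg_one_of_sub_add_mul_sub_eq_zero {ξ ρ μ a b : K}
    (hξρμ : ξ ^ 2 * (ρ * μ) = 1) (hq : (ξ * ρ) ^ 2 ≠ 1)
    (h : a * μ ^ (-1 : ℤ) - b * ρ ^ (-1 : ℤ) + ξ * (a - b) = 0) :
    a = b * (ξ * ρ) ^ (-1 : ℤ) := by
  have hξ : ξ ≠ 0 := by rintro rfl; simp at hξρμ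
  have hρ : ρ ≠ 0 := by rintro rfl; simp at hξρμ
  have hμ : μ⁻¹ = ξ ^ 2 * ρ := (eq_inv_of_mul_eq_one_left (by linear_combination hξρμ)).symm
  have hq1 : ξ * ρ + 1 ≠ 0 := fun h => hq (by linear_combination (ξ * ρ - 1) * h)
  have hfactor : (ξ * ρ + 1) * (a * (ξ * ρ) - b) = 0 := by
    rw [zpow_neg_one, zpow_neg_one, hμ] at h
    field_simp at h
    linear_combination h
  have := (mul_eq_zero.1 hfactor).resolve_left hq1
  rw [zpow_neg_one, eq_mul_inv_iff_mul_eq₀ (mul_ne_zero hξ hρ)]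
  linear_combination this

end TwistedSum

section Cocycle

variable {K G : Type*} [Field K] [AddGroup G]

theorem AddChar.map_add_zsmul (ψ : AddChar G K) (g u : G) (t : ℤ) :
    ψ (g + t • u) = ψ g * ψ u ^ t := by
  rw [ψ.map_add_eq_mul, ψ.map_zsmul_eq_zpow]

theorem cocycle_eq_mul_sub {r l h : G → K} (hcoc : ∀ m n, h (m + n) = h m * r n + l m * h n)
    {u g : G} (hug : u + g = g + u) (hlr : l u ≠ r u) :
    h g = h u / (l u - r u) * (l g - r g) := by
  have hswap := hcoc u g
  rw [hug, hcoc g u] at hswap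
  field_simp [sub_ne_zero.2 hlr]
  linear_combination -hswap

theorem cocycle_add_zsmul {h : G → K} (ψr ψl : AddChar G K)
    (hcoc : ∀ m n, h (m + n) = h m * ψr n + ψl m * h n)
    {u : G} (hu : ∀ g, u + g = g + u) (hlr : ψl u ≠ ψr u) (g : G) (t : ℤ) :
    h (g + t • u) = h u / (ψl u - ψr u) * (ψl g * ψl u ^ t - ψr g * ψr u ^ t) := by
  rw [cocycle_eq_mul_sub hcoc (hu _) hlr, ψl.map_add_zsmul, ψr.map_add_zsmul]

theorem cocycle_exists_eq_mul_zpow {h : G → K} (ψr ψl : AddChar G K)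
    (hcoc : ∀ m n, h (m + n) = h m * ψr n + ψl m * h n)
    {u : G} (hu : ∀ g, u + g = g + u) {ξ : K} (hξ : ξ ^ 2 * (ψr u * ψl u) = 1)
    (hq : (ξ * ψr u) ^ 2 ≠ 1) (hhu : h u ≠ 0) {m : G} (hm : h m = 0 ∨ h (m - u) + ξ * h m = 0) :
    ∃ s : ℤ, -1 ≤ s ∧ ψl m = ψr m * (ξ * ψr u) ^ s := by
  have hlr : ψl u ≠ ψr u := fun heq => hq (by rw [← hξ, heq]; ring)
  have hc : h u / (ψl u - ψr u) ≠ 0 := div_ne_zero hhu (sub_ne_zero.2 hlr)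
  have hm0 := cocycle_add_zsmul ψr ψl hcoc hu hlr m 0
  have hm1 := cocycle_add_zsmul ψr ψl hcoc hu hlr m (-1)
  rw [zero_zsmul, add_zero, zpow_zero, zpow_zero, mul_one, mul_one] at hm0
  rw [neg_one_zsmul, ← sub_eq_add_neg] at hm1
  rcases hm with hm | hm
  · rw [hm0] at hm
    refine ⟨0, by norm_num, ?_⟩
    simpa [sub_eq_zero] using (mul_eq_zero.1 hm).resolve_left hc
  · rw [hm1, hm0, ← mul_assoc, mul_comm ξ, mul_assoc, ← mul_add] at hm
    exact ⟨-1, le_rfl, eq_mul_zpow_neg_one_of_sub_add_mul_sub_eq_zero hξ hq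
      ((mul_eq_zero.1 hm).resolve_left hc)⟩

end Cocycle

theorem stmt16_general {K : Type*} [Field K] {G : Type*} [AddGroup G]
    (r l h : G → K)
    (hr1 : r 0 = 1) (hradd : ∀ m n, r (m + n) = r m * r n) (hrne : ∀ m, r m ≠ 0)
    (hl1 : l 0 = 1) (hladd : ∀ m n, l (m + n) = l m * l n)
    (hcoc : ∀ m n, h (m + n) = h m * r n + l m * h n)
    (u : G) (hu : ∀ g : G, u + g = g + u)
    (ξ : K) (hξ : ξ ≠ 0) (hxirl : ξ ^ 2 * (r u * l u) = 1)
    (hhu : h u ≠ 0)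
    (hroot : ∀ k : ℤ, k ≠ 0 → (ξ * r u) ^ k ≠ 1)
    (m : G) (hm : h m = 0 ∨ h (m - u) + ξ * h m = 0) :
    ∀ j : ℤ, j < 0 → ∀ n : ℕ, 0 < n →
      ∑ k ∈ Finset.range n, ξ ^ (n - 1 - k) * h (m + j • u - k • u) ≠ 0 := by
  intro j hj n hn
  have hq0 : ξ * r u ≠ 0 :=
    left_ne_zero_of_mul_eq_one (b := ξ * l u) (by linear_combination hxirl)
  have hq2 : (ξ * r u) ^ 2 ≠ 1 := by exact_mod_cast hroot 2 two_ne_zero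
  have hlr : l u ≠ r u := fun heq => hq2 (by rw [← hxirl, heq]; ring)
  let ψr : AddChar G K := ⟨r, hr1, hradd⟩
  let ψl : AddChar G K := ⟨l, hl1, hladd⟩
  set c := h u / (l u - r u)
  have hc : c ≠ 0 := div_ne_zero hhu (sub_ne_zero.2 hlr)
  have hshift : ∀ t : ℤ, h (m + t • u) = c * (l m * l u ^ t - r m * r u ^ t) :=
    cocycle_add_zsmul ψr ψl hcoc hu hlr m
  obtain ⟨s, hs, hlm⟩ : ∃ s : ℤ, -1 ≤ s ∧ l m = r m * (ξ * r u) ^ s :=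
    cocycle_exists_eq_mul_zpow ψr ψl hcoc hu hxirl hq2 hhu hm
  have hsum : ∑ k ∈ range n, ξ ^ (n - 1 - k) * h (m + j • u - k • u) =
      c * ∑ k ∈ range n, ξ ^ (n - 1 - k) * (l m * l u ^ (j - k) - r m * r u ^ (j - k)) := by
    rw [mul_sum]
    refine sum_congr rfl fun k _ => ?_
    rw [add_sub_assoc, ← natCast_zsmul, sub_eq_add_neg, ← sub_zsmul, hshift]
    ring
  have hgeom := geom_sum_ne_zero_of_pow_ne_one (n := n) (by simpa using hroot 1 one_ne_zero)
    (by exact_mod_cast hroot n (by omega))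
  rw [hsum, sum_range_pow_mul_zpow_sub hxirl, hlm]
  exact mul_ne_zero hc (mul_ne_zero (mul_ne_zero (mul_ne_zero (zpow_ne_zero _ hξ)
    (zpow_ne_zero _ hq0)) hgeom) (mul_zpow_sub_mul_zpow_ne_zero hq0 (hrne m) hroot (by omega)))

theorem stmt16 {K : Type*} [Field K] {G : Type*} [AddGroup G]
    (r l h : G → K)
    (hr1 : r 0 = 1) (hradd : ∀ m n, r (m + n) = r m * r n) (hrne : ∀ m, r m ≠ 0)
    (hl1 : l 0 = 1) (hladd : ∀ m n, l (m + n) = l m * l n) (hlne : ∀ m, l m ≠ 0)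
    (hcoc : ∀ m n, h (m + n) = h m * r n + l m * h n)
    (h0 : h 0 = 0)
    (u : G) (hu : ∀ g : G, u + g = g + u)
    (ξ : K) (hξ : ξ ≠ 0) (hxirl : ξ ^ 2 * (r u * l u) = 1)
    (hhu : h u ≠ 0)
    (hroot : ∀ k : ℤ, k ≠ 0 → (ξ * r u) ^ k ≠ 1)
    (m : G) (hm : h m = 0 ∨ h (m - u) + ξ * h m = 0) :
    ∀ j : ℤ, j < 0 → ∀ n : ℕ, 0 < n →
      ∑ k ∈ Finset.range n, ξ ^ (n - 1 - k) * h (m + j • u - k • u) ≠ 0 :=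
  stmt16_general r l h hr1 hradd hrne hl1 hladd hcoc u hu ξ hξ hxirl hhu hroot m hm
end

section
/- Assume h(ū) ≠ 0 and ξ r₁ is not a root of unity. Let m ∈ G with h(m) = 0, and for j ≥ 0 define the Casimir eigenvalue c(j) = ∑_{k=0}^{j-1} ξ^k h(m + (k+1)·ū). If c(j₁) = c(j₂) for non-negative integers j₁, j₂, then j₁ = j₂. -/
/-!
With `a = ξ r(u)` and `b = ξ l(u) = a⁻¹`, the cocycle identity makes `ξ^k h((k+1)•u)` satisfy
`x_{k+1} = a x_k + b^{k+1} h(u)`, whence `(a² - 1) x_k = h(u) (a^{k+2} - b^k)`; since `h(m) = 0`,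
`h(m + x) = l(m) h(x)`. Summing, `(a - 1)(a² - 1) c(j) = l(m) h(u) a (a^{j+1} + b^j - a - 1)`, and
`a^{i+1} + b^i = a^{j+1} + b^j` factors as `(a^i - a^j)(a^{i+j+1} - 1) = 0`, which forces `i = j`
because `a` is not a root of unity.
-/

open Finset

section Injectivity

variable {K : Type*} [Field K] {a b : K}

lemma eq_of_pow_eq_pow_of_zpow_ne_one (ha₀ : a ≠ 0) (ha : ∀ k : ℤ, k ≠ 0 → a ^ k ≠ 1)
    {m n : ℕ} (h : a ^ m = a ^ n) : m = n := by
  by_contra hmn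
  refine ha ((m : ℤ) - n) (sub_ne_zero.2 (by exact_mod_cast hmn)) ?_
  rw [zpow_sub₀ ha₀, zpow_natCast, zpow_natCast, h, div_self (pow_ne_zero _ ha₀)]

lemma injective_pow_succ_add_pow (hab : a * b = 1) (ha : ∀ k : ℤ, k ≠ 0 → a ^ k ≠ 1) :
    Function.Injective fun j : ℕ ↦ a ^ (j + 1) + b ^ j := by
  intro i j hij
  have hpow (n : ℕ) : a ^ n * b ^ n = 1 := by rw [← mul_pow, hab, one_pow]
  have key : (a ^ i - a ^ j) * (a ^ (i + j + 1) - 1) = 0 := by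
    linear_combination a ^ (i + j) * hij - a ^ j * hpow i + a ^ i * hpow j
  rcases mul_eq_zero.1 key with h | h
  · exact eq_of_pow_eq_pow_of_zpow_ne_one (left_ne_zero_of_mul_eq_one hab) ha (sub_eq_zero.1 h)
  · exact absurd (sub_eq_zero.1 h) (mod_cast ha (i + j + 1) (by omega))

end Injectivity

section Cocycle

variable {K G : Type*} [Field K] [AddMonoid G] {r l h : G → K} {ξ a b : K} {u m : G}

lemma map_nsmul_eq_pow_of_map_add_s19 (hl₀ : l 0 = 1) (hl : ∀ m n, l (m + n) = l m * l n)
    (n : ℕ) : l (n • u) = l u ^ n := by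
  induction n with
  | zero => simpa using hl₀
  | succ n ih => rw [succ_nsmul, hl, ih, pow_succ]

lemma sq_sub_one_mul_pow_mul_apply_succ_nsmul (hcoc : ∀ m n, h (m + n) = h m * r n + l m * h n)
    (hl : ∀ n : ℕ, l (n • u) = l u ^ n) (ha : ξ * r u = a) (hb : ξ * l u = b) (hab : a * b = 1)
    (n : ℕ) : (a ^ 2 - 1) * (ξ ^ n * h ((n + 1) • u)) = h u * (a ^ (n + 2) - b ^ n) := by
  induction n with
  | zero => rw [zero_add, one_nsmul]; ring
  | succ n ih =>
    have hstep : ξ ^ (n + 1) * h ((n + 1 + 1) • u) =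
        a * (ξ ^ n * h ((n + 1) • u)) + b ^ (n + 1) * h u := by
      rw [succ_nsmul u (n + 1), hcoc, hl, ← ha, ← hb]; ring
    linear_combination a * ih + (a ^ 2 - 1) * hstep + h u * a * b ^ n * hab

variable (h ξ u m) in
def casimir (j : ℕ) : K := ∑ k ∈ range j, ξ ^ k * h (m + (k + 1) • u)

lemma casimir_closed_form (hcoc : ∀ m n, h (m + n) = h m * r n + l m * h n)
    (hl : ∀ n : ℕ, l (n • u) = l u ^ n) (ha : ξ * r u = a) (hb : ξ * l u = b) (hab : a * b = 1)
    (hm : h m = 0) (j : ℕ) :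
    (a - 1) * (a ^ 2 - 1) * casimir h ξ u m j = l m * h u * a * (a ^ (j + 1) + b ^ j - a - 1) := by
  induction j with
  | zero => simp [casimir]
  | succ j ih =>
    have hshift : h (m + (j + 1) • u) = l m * h ((j + 1) • u) := by
      rw [hcoc, hm, zero_mul, zero_add]
    rw [casimir, sum_range_succ, ← casimir, hshift]
    have hterm := sq_sub_one_mul_pow_mul_apply_succ_nsmul hcoc hl ha hb hab j
    linear_combination ih + (a - 1) * l m * hterm - l m * h u * b ^ j * hab

lemma casimir_injective (hcoc : ∀ m n, h (m + n) = h m * r n + l m * h n)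
    (hl : ∀ n : ℕ, l (n • u) = l u ^ n) (ha : ξ * r u = a) (hb : ξ * l u = b) (hab : a * b = 1)
    (hroot : ∀ k : ℤ, k ≠ 0 → a ^ k ≠ 1) (hlm : l m ≠ 0) (hhu : h u ≠ 0) (hm : h m = 0) :
    Function.Injective (casimir h ξ u m) := by
  intro i j hij
  have hc := casimir_closed_form hcoc hl ha hb hab hm
  have hne : l m * h u * a ≠ 0 :=
    mul_ne_zero (mul_ne_zero hlm hhu) (left_ne_zero_of_mul_eq_one hab)
  refine injective_pow_succ_add_pow hab hroot ?_
  exact sub_left_inj.1 (sub_left_inj.1 (mul_left_cancel₀ hne ((hc i).symm.trans (hij ▸ hc j))))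

end Cocycle

theorem stmt19_general {K : Type*} [Field K] {G : Type*} [AddGroup G]
    (r l h : G → K)
    (hl1 : l 0 = 1) (hladd : ∀ m n, l (m + n) = l m * l n) (hlne : ∀ m, l m ≠ 0)
    (hcoc : ∀ m n, h (m + n) = h m * r n + l m * h n)
    (u : G)
    (ξ : K) (hxirl : ξ ^ 2 * (r u * l u) = 1)
    (hhu : h u ≠ 0)
    (hroot : ∀ k : ℤ, k ≠ 0 → (ξ * r u) ^ k ≠ 1)
    (m : G) (hm : h m = 0) :
    ∀ j₁ j₂ : ℕ,
      (∑ k ∈ Finset.range j₁, ξ ^ k * h (m + (k + 1) • u))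
        = (∑ k ∈ Finset.range j₂, ξ ^ k * h (m + (k + 1) • u)) → j₁ = j₂ := by
  have hab : ξ * r u * (ξ * l u) = 1 := by linear_combination hxirl
  exact casimir_injective hcoc (map_nsmul_eq_pow_of_map_add_s19 hl1 hladd) rfl rfl hab hroot
    (hlne m) hhu hm

theorem stmt19 {K : Type*} [Field K] {G : Type*} [AddGroup G]
    (r l h : G → K)
    (hr1 : r 0 = 1) (hradd : ∀ m n, r (m + n) = r m * r n) (hrne : ∀ m, r m ≠ 0)
    (hl1 : l 0 = 1) (hladd : ∀ m n, l (m + n) = l m * l n) (hlne : ∀ m, l m ≠ 0)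
    (hcoc : ∀ m n, h (m + n) = h m * r n + l m * h n)
    (h0 : h 0 = 0)
    (u : G) (hu : ∀ g : G, u + g = g + u)
    (ξ : K) (hξ : ξ ≠ 0) (hxirl : ξ ^ 2 * (r u * l u) = 1)
    (hhu : h u ≠ 0)
    (hroot : ∀ k : ℤ, k ≠ 0 → (ξ * r u) ^ k ≠ 1)
    (m : G) (hm : h m = 0) :
    ∀ j₁ j₂ : ℕ,
      (∑ k ∈ Finset.range j₁, ξ ^ k * h (m + (k + 1) • u))
        = (∑ k ∈ Finset.range j₂, ξ ^ k * h (m + (k + 1) • u)) → j₁ = j₂ :=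
  stmt19_general r l h hl1 hladd hlne hcoc u ξ hxirl hhu hroot m hm
end
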